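/- Let n ≥ 0 (the normalized test-channel noise variance σ_N²/v) and let D̄ satisfy 0 < D̄ ≤ v·r. Set Q̄ = v·((r−ρ²) + r·n)/D̄ − n. Then Q̄ ≥ 1 − ρ²/r, and for α ∈ ℝ one has D_P(α, v·n) = D̄ if and only if Q(α) = Q̄, if and only if α = −ρ/r + √((Q̄ − (1−ρ²/r))/r) or α = −ρ/r − √((Q̄ − (1−ρ²/r))/r). Among these two roots, the one with the plus sign yields the smaller distortion D_C(·, v·n). -/

import Mathlib

/-- `Q α = 1 + 2αρ + α²r`, the normalized second moment of `Y = X + αθ` (divided by `v`). -/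
noncomputable def Q (ρ r α : ℝ) : ℝ := 1 + 2 * α * ρ + α ^ 2 * r

/-- Distortion `D_C(α, s) = E(X − E[X|Y])²` for `Y = X + αθ + S`, `S ~ N(0, s)`. -/
noncomputable def DC (v ρ r α s : ℝ) : ℝ :=
  v * (1 - (1 + α * ρ) ^ 2 / (Q ρ r α + s / v))

/-- Privacy level `D_P(α, s) = E(θ − E[θ|Y])²` for `Y = X + αθ + S`, `S ~ N(0, s)`. -/
noncomputable def DP (v ρ r α s : ℝ) : ℝ :=
  v * (r - (ρ + r * α) ^ 2 / (Q ρ r α + s / v))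
/-- The target value of `Q(α)` in the compression setting with normalized test-channel noise
variance `n` and privacy level `D̄`. -/
noncomputable def Qbar (v ρ r n D : ℝ) : ℝ := v * ((r - ρ ^ 2) + r * n) / D - n

/-!
Completing the square, `Q(α) = r (α + ρ/r)² + (1 - ρ²/r)` and `(ρ + rα)² = r Q(α) - (r - ρ²)`.
The second identity turns the privacy level into `D_P(α, vn) = v (r - ρ² + rn) / (Q(α) + n)`,
which depends on `α` only through `Q(α)` and is decreasing in it, so `D_P = D̄` pins down
`Q(α) = Q̄`, and the first identity solves this quadratic equation; it has real roots because
`Q̄ + n = (vr/D̄)(1 - ρ²/r + n)` with `vr/D̄ ≥ 1`. The two roots share the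
value of `Q`, so their distortions differ only through the numerator `(1 + αρ)²`, which equals
`(1 - ρ²/r ± ρ√⋯)²` and is larger for the plus sign.
-/

theorem Q_eq_mul_sq_add (ρ : ℝ) {r : ℝ} (hr : r ≠ 0) (α : ℝ) :
    Q ρ r α = r * (α + ρ / r) ^ 2 + (1 - ρ ^ 2 / r) := by
  unfold Q
  field_simp
  ring

theorem one_sub_div_le_Q (ρ : ℝ) {r : ℝ} (hr : 0 < r) (α : ℝ) : 1 - ρ ^ 2 / r ≤ Q ρ r α := by
  rw [Q_eq_mul_sq_add ρ hr.ne' α]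
  exact le_add_of_nonneg_left (by positivity)

theorem Q_eq_iff {ρ r q : ℝ} (hr : 0 < r) (hq : 1 - ρ ^ 2 / r ≤ q) (α : ℝ) :
    Q ρ r α = q ↔
      α = -ρ / r + √((q - (1 - ρ ^ 2 / r)) / r) ∨ α = -ρ / r - √((q - (1 - ρ ^ 2 / r)) / r) := by
  have hsq : √((q - (1 - ρ ^ 2 / r)) / r) ^ 2 = (q - (1 - ρ ^ 2 / r)) / r :=
    Real.sq_sqrt (div_nonneg (sub_nonneg.2 hq) hr.le)
  have hQ : Q ρ r α = q ↔ (α + ρ / r) ^ 2 = √((q - (1 - ρ ^ 2 / r)) / r) ^ 2 := by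
    rw [hsq, eq_div_iff hr.ne', Q_eq_mul_sq_add ρ hr.ne']
    constructor <;> intro h <;> linarith
  rw [hQ, sq_eq_sq_iff_eq_or_eq_neg, neg_div]
  constructor <;> rintro (h | h) <;> [left; right; left; right] <;> linarith

theorem r_mul_Q (ρ r α : ℝ) : r * Q ρ r α = (ρ + r * α) ^ 2 + (r - ρ ^ 2) := by
  unfold Q
  ring

theorem DP_mul_eq {v : ℝ} (hv : v ≠ 0) (ρ r α : ℝ) {s : ℝ} (hs : Q ρ r α + s ≠ 0) :
    DP v ρ r α (v * s) = v * (r - ρ ^ 2 + r * s) / (Q ρ r α + s) := by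
  rw [DP, mul_div_cancel_left₀ s hv]
  field_simp
  linear_combination r_mul_Q ρ r α

theorem Qbar_add (v ρ r n D : ℝ) : Qbar v ρ r n D + n = v * (r - ρ ^ 2 + r * n) / D :=
  sub_add_cancel _ _

theorem DP_mul_eq_iff_Q_eq_Qbar {v ρ r n D α : ℝ} (hv : v ≠ 0) (hD : D ≠ 0)
    (hQ : Q ρ r α + n ≠ 0) : DP v ρ r α (v * n) = D ↔ Q ρ r α = Qbar v ρ r n D := by
  rw [DP_mul_eq hv ρ r α hQ, div_eq_iff hQ, Qbar, eq_sub_iff_add_eq, eq_div_iff hD, mul_comm D,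
    eq_comm]

theorem one_sub_div_le_Qbar {v ρ r n D : ℝ} (hr : r ≠ 0) (hn : 0 ≤ 1 - ρ ^ 2 / r + n)
    (hD0 : 0 < D) (hD : D ≤ v * r) : 1 - ρ ^ 2 / r ≤ Qbar v ρ r n D := by
  have hQbar : Qbar v ρ r n D + n = v * r / D * (1 - ρ ^ 2 / r + n) := by
    rw [Qbar_add]
    field_simp
  have : 1 - ρ ^ 2 / r + n ≤ v * r / D * (1 - ρ ^ 2 / r + n) :=
    le_mul_of_one_le_left hn ((one_le_div hD0).2 hD)
  linarith

theorem DC_le_DC_of_Q_eq {v ρ r α β s : ℝ} (hv : 0 ≤ v) (hQ : Q ρ r α = Q ρ r β)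
    (hpos : 0 < Q ρ r α + s / v) (hsq : (1 + β * ρ) ^ 2 ≤ (1 + α * ρ) ^ 2) :
    DC v ρ r α s ≤ DC v ρ r β s := by
  unfold DC
  rw [← hQ]
  gcongr

/-- Compression setting (Theorem 3): for test-channel noise variance `v·n` and privacy level
`D̄ ∈ (0, vr]`, one has `Q̄ ≥ 1 − ρ²/r`; the privacy constraint `D_P(α, vn) = D̄` holds iff
`Q(α) = Q̄` iff `α = −ρ/r ± √((Q̄ − (1−ρ²/r))/r)`, and the plus-root achieves the smaller
distortion. -/
theorem compression_roots (v ρ r n D : ℝ) (hv : 0 < v) (hρ : 0 ≤ ρ) (hr : ρ ^ 2 < r)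
    (hn : 0 ≤ n) (hD0 : 0 < D) (hD : D ≤ v * r) :
    1 - ρ ^ 2 / r ≤ Qbar v ρ r n D ∧
    (∀ α : ℝ,
      (DP v ρ r α (v * n) = D ↔ Q ρ r α = Qbar v ρ r n D) ∧
      (DP v ρ r α (v * n) = D ↔
        α = -ρ / r + Real.sqrt ((Qbar v ρ r n D - (1 - ρ ^ 2 / r)) / r) ∨
        α = -ρ / r - Real.sqrt ((Qbar v ρ r n D - (1 - ρ ^ 2 / r)) / r))) ∧
    DC v ρ r (-ρ / r + Real.sqrt ((Qbar v ρ r n D - (1 - ρ ^ 2 / r)) / r)) (v * n)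
      ≤ DC v ρ r (-ρ / r - Real.sqrt ((Qbar v ρ r n D - (1 - ρ ^ 2 / r)) / r)) (v * n) := by
  have hr0 : 0 < r := (sq_nonneg ρ).trans_lt hr
  have hc : 0 < 1 - ρ ^ 2 / r := sub_pos.2 ((div_lt_one hr0).2 hr)
  have hQn (α : ℝ) : 0 < Q ρ r α + n := by linarith [one_sub_div_le_Q ρ hr0 α]
  have hQbar : 1 - ρ ^ 2 / r ≤ Qbar v ρ r n D :=
    one_sub_div_le_Qbar hr0.ne' (by linarith) hD0 hD
  have hDP (α : ℝ) : DP v ρ r α (v * n) = D ↔ Q ρ r α = Qbar v ρ r n D :=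
    DP_mul_eq_iff_Q_eq_Qbar hv.ne' hD0.ne' (hQn α).ne'
  have hroots (α : ℝ) := Q_eq_iff hr0 hQbar α
  refine ⟨hQbar, fun α => ⟨hDP α, (hDP α).trans (hroots α)⟩, ?_⟩
  set t := √((Qbar v ρ r n D - (1 - ρ ^ 2 / r)) / r)
  apply DC_le_DC_of_Q_eq hv.le
  · rw [(hroots _).2 (.inl rfl), (hroots _).2 (.inr rfl)]
  · rw [mul_div_cancel_left₀ n hv.ne']
    exact hQn _
  · have htρ : 0 ≤ t * ρ := mul_nonneg (Real.sqrt_nonneg _) hρ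
    rw [show 1 + (-ρ / r + t) * ρ = 1 - ρ ^ 2 / r + t * ρ by ring,
      show 1 + (-ρ / r - t) * ρ = 1 - ρ ^ 2 / r - t * ρ by ring]
    exact sq_le_sq' (by linarith) (by linarith)
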